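/- arXiv:2407.07993 — 7 statements merged into one kernel-verified Lean document; each statement's English description precedes it below -/
import Mathlib

section
/- Let f: R^{t+1} → R be the R-linear map sending the i-th standard basis vector to (−1)^i times the i-th maximal minor of M_E, and regard M_E as an R-linear map R^t → R^{t+1}. Then: M_E is injective, the kernel of f equals the image of M_E, and the image of f equals E. In other words, 0 → R^t → R^{t+1} → E → 0 is a free resolution of the ideal E. -/
/-!
Deleting row `i` of `M_E` leaves a matrix which, once its first `i` rows and columns are
taken in reverse order, is upper triangular with diagonal `y^{d_1}, …, y^{d_i}, -x, …, -x`.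
Hence `f` sends `e_i` to `±x^{t-i} y^{m_i}`, so `range f = E`, and the minor of the last row
is `y^{m_t} ≠ 0`, so `M_E` is injective. That `f ∘ M_E = 0` holds for every `(t+1) × t`
matrix: it is the Laplace expansion of a determinant with a repeated column.

Conversely let `∑ v_i x^{t-i} y^{m_i} = 0`. The partial sums `S_j = ∑_{i ≤ j} v_i x^{j-i} y^{m_i}`
satisfy `S_{j+1} = x S_j + v_{j+1} y^{m_{j+1}}` and `S_t = 0`. As `y` is prime and does not divide
`x`, downward induction gives `y^{m_{j+1}} ∣ S_j`, and the quotients `w_j = S_j / y^{m_{j+1}}`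
solve `M_E w = v`.
-/

open MvPolynomial
open scoped Matrix

theorem Fin.val_succAbove {n : ℕ} (p : Fin (n + 1)) (i : Fin n) :
    (p.succAbove i : ℕ) = if (i : ℕ) < p then (i : ℕ) else (i : ℕ) + 1 := by
  unfold Fin.succAbove
  split_ifs <;> simp_all [Fin.lt_def]

theorem Finset.prod_range_ite_lt {M : Type*} [CommMonoid M] (f : ℕ → M) (c : M) {n t : ℕ}
    (h : n ≤ t) :
    ∏ r ∈ range t, (if r < n then f r else c) = (∏ r ∈ range n, f r) * c ^ (t - n) := by
  obtain ⟨s, rfl⟩ := Nat.exists_eq_add_of_le h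
  rw [prod_range_add, Nat.add_sub_cancel_left]
  congr 1
  · exact prod_congr rfl fun r hr => if_pos (mem_range.mp hr)
  · simp

theorem Finset.sum_range_tsub_add_eq {m : ℕ → ℕ} {t : ℕ} (hmono : ∀ i < t, m i ≤ m (i + 1))
    {n : ℕ} (hn : n ≤ t) : ∑ i ∈ range n, (m (i + 1) - m i) + m 0 = m n := by
  induction n with
  | zero => simp
  | succ n ih =>
    have := hmono n hn
    rw [sum_range_succ]
    omega

section

variable {R : Type*} [CommRing R]

theorem LinearMap.eq_linearCombination_single {M ι : Type*} [AddCommGroup M]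
    [Module R M] [Fintype ι] [DecidableEq ι] (f : (ι → R) →ₗ[R] M) :
    f = Fintype.linearCombination R fun i => f (Pi.single i 1) := by
  ext i
  simp

namespace Matrix

theorem det_of_blockTriangular_of_injective {m α : Type*} [DecidableEq m] [Fintype m]
    [LinearOrder α] {M : Matrix m m R} {b : m → α} (hb : Function.Injective b)
    (h : M.BlockTriangular b) : M.det = ∏ i, M i i := by
  let : LinearOrder m := LinearOrder.lift' b hb
  exact det_of_isUpperTriangular h

variable {n : ℕ}

theorem sum_neg_one_pow_mul_mul_det_submatrix_succAbove (A : Matrix (Fin (n + 1)) (Fin n) R)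
    (j : Fin n) :
    ∑ i : Fin (n + 1), (-1) ^ (i : ℕ) * A i j * (A.submatrix i.succAbove id).det = 0 := by
  let B : Matrix (Fin (n + 1)) (Fin (n + 1)) R := of fun i => Fin.snoc (A i) (A i j)
  have hB : B.det = 0 :=
    det_zero_of_column_eq (Fin.castSucc_lt_last j).ne fun i => by simp [B]
  rw [det_succ_column B (Fin.last n)] at hB
  have hsub : ∀ i : Fin (n + 1),
      B.submatrix i.succAbove Fin.castSucc = A.submatrix i.succAbove id := fun i => by
    ext; simp [B]
  simp only [B, of_apply, Fin.snoc_last, Fin.val_last, pow_add,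
    Fin.succAbove_last, hsub, mul_right_comm _ ((-1 : R) ^ n), ← Finset.sum_mul] at hB
  exact ((isUnit_neg_one.pow n).mul_left_eq_zero).mp hB

theorem range_mulVecLin_le_ker_of_signed_minors {A : Matrix (Fin (n + 1)) (Fin n) R}
    {f : (Fin (n + 1) → R) →ₗ[R] R}
    (hf : ∀ i, f (Pi.single i 1) = (-1) ^ ((i : ℕ) + 1) * (A.submatrix i.succAbove id).det) :
    LinearMap.range A.mulVecLin ≤ LinearMap.ker f := by
  rintro _ ⟨w, rfl⟩
  rw [LinearMap.mem_ker, f.eq_linearCombination_single, Fintype.linearCombination_apply]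
  simp only [hf, mulVecLin_apply, mulVec, dotProduct, smul_eq_mul, Finset.sum_mul]
  rw [Finset.sum_comm]
  refine Finset.sum_eq_zero fun j _ => ?_
  calc ∑ i, A i j * w j * ((-1) ^ ((i : ℕ) + 1) * (A.submatrix i.succAbove id).det)
      = -w j * ∑ i : Fin (n + 1), (-1) ^ (i : ℕ) * A i j * (A.submatrix i.succAbove id).det := by
        rw [Finset.mul_sum]
        exact Finset.sum_congr rfl fun i _ => by ring
    _ = 0 := by rw [sum_neg_one_pow_mul_mul_det_submatrix_succAbove, mul_zero]

theorem mulVecLin_injective_of_det_submatrix_succAbove_ne_zero [NoZeroDivisors R]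
    {A : Matrix (Fin (n + 1)) (Fin n) R} (i : Fin (n + 1))
    (h : (A.submatrix i.succAbove id).det ≠ 0) : Function.Injective A.mulVecLin :=
  (injective_iff_map_eq_zero _).2 fun _ hv => eq_zero_of_mulVec_eq_zero h <|
    funext fun r => congrFun hv (i.succAbove r)

end Matrix

/-- With `a j = y ^ d_{j+1}` this is `M_E`, its rows and columns indexed from `0`. -/
def hilbertBurchMatrix (x : R) (a : ℕ → R) (t : ℕ) : Matrix (Fin (t + 1)) (Fin t) R :=
  fun i j => if (i : ℕ) = j then a j else if (i : ℕ) = j + 1 then -x else 0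

theorem det_hilbertBurchMatrix_submatrix_succAbove (x : R) (a : ℕ → R) {t : ℕ} (i : Fin (t + 1)) :
    ((hilbertBurchMatrix x a t).submatrix i.succAbove id).det =
      (∏ j ∈ Finset.range i, a j) * (-x) ^ (t - i) := by
  set N := (hilbertBurchMatrix x a t).submatrix i.succAbove id
  have hN : ∀ r c : Fin t, N r c =
      if (r : ℕ) < i then (if (r : ℕ) = c then a c else if (r : ℕ) = c + 1 then -x else 0)
      else (if (r : ℕ) + 1 = c then a c else if (r : ℕ) = c then -x else 0) := by
    intro r c
    simp only [N, Matrix.submatrix_apply, id, hilbertBurchMatrix, Fin.val_succAbove]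
    split_ifs <;> first | rfl | omega
  -- listing the rows `r < i` backwards makes `N` upper triangular
  have htri : N.BlockTriangular fun r : Fin t => if (r : ℕ) < i then -(r : ℤ) else r := by
    intro r c hrc
    dsimp only at hrc
    rw [hN]
    split_ifs at hrc ⊢ <;> first | rfl | omega
  have hinj : Function.Injective fun r : Fin t => if (r : ℕ) < i then -(r : ℤ) else r := by
    intro r c hrc
    dsimp only at hrc
    ext
    split_ifs at hrc <;> omega
  have hdiag : ∀ r : Fin t, N r r = if (r : ℕ) < i then a r else -x := fun r => by
    rw [hN]; split_ifs <;> first | rfl | omega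
  rw [Matrix.det_of_blockTriangular_of_injective hinj htri,
    Finset.prod_congr rfl fun r _ => hdiag r,
    Fin.prod_univ_eq_prod_range (fun r => if r < (i : ℕ) then a r else -x),
    Finset.prod_range_ite_lt a (-x) (Fin.is_le i)]

theorem signed_det_hilbertBurchMatrix_submatrix_succAbove {x y : R} {t : ℕ} {m : ℕ → ℕ}
    (hm0 : m 0 = 0) (hmono : ∀ i < t, m i ≤ m (i + 1)) (i : Fin (t + 1)) :
    (-1) ^ ((i : ℕ) + 1) *
        ((hilbertBurchMatrix x (fun j => y ^ (m (j + 1) - m j)) t).submatrix i.succAbove id).det =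
      (-1) ^ (t + 1) * (x ^ (t - i) * y ^ m i) := by
  have hexp : ∑ j ∈ Finset.range i, (m (j + 1) - m j) = m i := by
    simpa [hm0] using Finset.sum_range_tsub_add_eq hmono (Nat.lt_succ_iff.mp i.is_lt)
  have hsign : (-1 : R) ^ (t + 1) = (-1) ^ ((i : ℕ) + 1) * (-1) ^ (t - i) := by
    rw [← pow_add, show (i : ℕ) + 1 + (t - i) = t + 1 by omega]
  rw [det_hilbertBurchMatrix_submatrix_succAbove, Finset.prod_pow_eq_pow_sum, hexp, neg_pow x,
    hsign]
  ring

theorem hilbertBurchMatrix_mulVec_apply (x : R) (a W : ℕ → R) {t : ℕ} (n : Fin (t + 1)) :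
    (hilbertBurchMatrix x a t *ᵥ fun j => W j) n =
      (if (n : ℕ) < t then a n * W n else 0) - if (n : ℕ) = 0 then 0 else x * W (n - 1) := by
  have hsplit : ∀ j : ℕ, (if (n : ℕ) = j then a j else if (n : ℕ) = j + 1 then -x else 0) * W j =
      (if (n : ℕ) = j then a j * W j else 0) - if (n : ℕ) = j + 1 then x * W j else 0 := by
    intro j
    split_ifs <;> first | omega | ring
  simp only [Matrix.mulVec, dotProduct, hilbertBurchMatrix]
  rw [Fin.sum_univ_eq_sum_range (fun j => (if (n : ℕ) = j then a j
    else if (n : ℕ) = j + 1 then -x else 0) * W j), Finset.sum_congr rfl fun j _ => hsplit j,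
    Finset.sum_sub_distrib, Finset.sum_ite_eq]
  congr 1
  · simp only [Finset.mem_range]
  obtain ⟨n, hn⟩ := n
  cases n with
  | zero => simp
  | succ p => simp [Finset.sum_ite_eq, show p < t by omega]

theorem exists_hilbertBurchMatrix_mulVec_eq_of_horner [IsDomain R] {x y : R} (hy : Prime y)
    (hyx : ¬y ∣ x) {t : ℕ} {m : ℕ → ℕ} (hmono : ∀ i < t, m i ≤ m (i + 1)) {V S : ℕ → R}
    (hS_zero : S 0 = V 0 * y ^ m 0) (hS_succ : ∀ j, S (j + 1) = x * S j + V (j + 1) * y ^ m (j + 1))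
    (hS_t : S t = 0) :
    ∃ w, hilbertBurchMatrix x (fun j => y ^ (m (j + 1) - m j)) t *ᵥ w =
      fun n : Fin (t + 1) => V n := by
  have hdvd_of_succ : ∀ j, y ^ m (j + 1) ∣ S (j + 1) → y ^ m (j + 1) ∣ S j := fun j h =>
    hy.pow_dvd_of_dvd_mul_left _ hyx <| (dvd_add_left (dvd_mul_left _ _)).mp (hS_succ j ▸ h)
  have hdvd : ∀ j ≤ t, y ^ m j ∣ S j := fun j hj =>
    Nat.decreasingInduction
      (fun k hk ih => (pow_dvd_pow y (hmono k hk)).trans (hdvd_of_succ k ih)) (by simp [hS_t]) hj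
  have hquot : ∀ j, ∃ u, j < t → S j = y ^ m (j + 1) * u := fun j => by
    by_cases hj : j < t
    · obtain ⟨u, hu⟩ := hdvd_of_succ j (hdvd (j + 1) hj)
      exact ⟨u, fun _ => hu⟩
    · exact ⟨0, fun h => absurd h hj⟩
  choose W hW using hquot
  refine ⟨fun j => W j, funext fun n => ?_⟩
  have hdiag : y ^ m n * (if (n : ℕ) < t then y ^ (m (n + 1) - m n) * W n else 0) = S n := by
    split_ifs with h
    · rw [← mul_assoc, ← pow_add, Nat.add_sub_cancel' (hmono n h), hW n h]
    · rw [mul_zero, show (n : ℕ) = t by omega, hS_t]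
  rw [hilbertBurchMatrix_mulVec_apply]
  apply mul_left_cancel₀ (pow_ne_zero (m n) hy.ne_zero)
  rw [mul_sub, hdiag]
  obtain ⟨n, hn⟩ := n
  cases n with
  | zero => simp [hS_zero, mul_comm]
  | succ p =>
    simp only [Nat.add_sub_cancel, Nat.succ_ne_zero, if_false]
    rw [mul_left_comm, ← hW p (by omega), hS_succ]
    ring

theorem exists_hilbertBurchMatrix_mulVec_eq [IsDomain R] {x y : R} (hy : Prime y) (hyx : ¬y ∣ x)
    {t : ℕ} {m : ℕ → ℕ} (hmono : ∀ i < t, m i ≤ m (i + 1)) {v : Fin (t + 1) → R}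
    (hv : ∑ i, v i * (x ^ (t - i) * y ^ m i) = 0) :
    ∃ w, hilbertBurchMatrix x (fun j => y ^ (m (j + 1) - m j)) t *ᵥ w = v := by
  set V : ℕ → R := fun n => if h : n < t + 1 then v ⟨n, h⟩ else 0
  set S : ℕ → R := fun j => ∑ i ∈ Finset.range (j + 1), V i * (x ^ (j - i) * y ^ m i)
  have hS_succ : ∀ j, S (j + 1) = x * S j + V (j + 1) * y ^ m (j + 1) := by
    intro j
    simp only [S]
    rw [Finset.sum_range_succ, Finset.mul_sum, Nat.sub_self, pow_zero, one_mul]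
    congr 1
    refine Finset.sum_congr rfl fun i hi => ?_
    rw [Nat.sub_add_comm (Nat.lt_succ_iff.mp (Finset.mem_range.mp hi)), pow_succ]
    ring
  have hS_t : S t = 0 := by
    simp only [S]
    rw [← hv, ← Fin.sum_univ_eq_sum_range (fun i => V i * (x ^ (t - i) * y ^ m i))]
    simp [V, Fin.is_le]
  obtain ⟨w, hw⟩ :=
    exists_hilbertBurchMatrix_mulVec_eq_of_horner hy hyx hmono (by simp [S]) hS_succ hS_t
  exact ⟨w, hw.trans (funext fun n => by simp only [V, dif_pos n.is_lt])⟩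

end

theorem stmt2_general (k : Type*) [Field k] (t : ℕ) (m : ℕ → ℕ)
    (hm0 : m 0 = 0) (hmono : ∀ i, i < t → m i ≤ m (i + 1))
    (E : Ideal (MvPolynomial (Fin 2) k))
    (hE : E = Ideal.span
      ((fun i : ℕ => (X 0 : MvPolynomial (Fin 2) k) ^ (t - i) * X 1 ^ (m i)) '' Set.Iic t))
    (M : Matrix (Fin (t + 1)) (Fin t) (MvPolynomial (Fin 2) k))
    (hM : M = fun (i : Fin (t + 1)) (j : Fin t) =>
      if (i : ℕ) = (j : ℕ) then (X 1 : MvPolynomial (Fin 2) k) ^ (m ((j : ℕ) + 1) - m (j : ℕ))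
      else if (i : ℕ) = (j : ℕ) + 1 then -X 0 else 0)
    (f : (Fin (t + 1) → MvPolynomial (Fin 2) k) →ₗ[MvPolynomial (Fin 2) k]
          MvPolynomial (Fin 2) k)
    (hf : ∀ i : Fin (t + 1), f (Pi.single i 1) =
      (-1) ^ ((i : ℕ) + 1) * (M.submatrix i.succAbove id).det) :
    Function.Injective M.mulVecLin ∧
    LinearMap.ker f = LinearMap.range M.mulVecLin ∧
    LinearMap.range f = E := by
  obtain rfl : M = hilbertBurchMatrix (X 0) (fun j => X 1 ^ (m (j + 1) - m j)) t := hM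
  have hfG : ∀ i : Fin (t + 1), f (Pi.single i 1) = (-1) ^ (t + 1) * (X 0 ^ (t - i) * X 1 ^ m i) :=
    fun i => (hf i).trans (signed_det_hilbertBurchMatrix_submatrix_succAbove hm0 hmono i)
  have hunit : IsUnit ((-1) ^ (t + 1) : MvPolynomial (Fin 2) k) := isUnit_neg_one.pow _
  refine ⟨Matrix.mulVecLin_injective_of_det_submatrix_succAbove_ne_zero (Fin.last t) ?_,
    le_antisymm (fun v hv => ?_) (Matrix.range_mulVecLin_le_ker_of_signed_minors hf), ?_⟩
  · rw [det_hilbertBurchMatrix_submatrix_succAbove, Fin.val_last, Nat.sub_self, pow_zero, mul_one]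
    exact Finset.prod_ne_zero_iff.mpr fun j _ => pow_ne_zero _ (X_ne_zero 1)
  · rw [LinearMap.mem_ker, f.eq_linearCombination_single, Fintype.linearCombination_apply] at hv
    simp only [hfG, smul_eq_mul, mul_left_comm _ ((-1) ^ (t + 1) : MvPolynomial (Fin 2) k),
      ← Finset.mul_sum, hunit.mul_right_eq_zero] at hv
    exact exists_hilbertBurchMatrix_mulVec_eq X_prime (by simp) hmono hv
  · rw [hE, f.eq_linearCombination_single, Fintype.range_linearCombination]
    simp only [hfG, ← smul_eq_mul, ← Set.smul_set_range]
    rw [Submodule.span_smul_eq_of_isUnit _ _ hunit, ← Set.Iio_add_one_eq_Iic, ← Fin.range_val,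
      ← Set.range_comp]
    rfl

/-- Let `M_E` be the Hilbert–Burch matrix of the monomial ideal
`E = (x^t, x^{t-1}y^{m_1}, …, y^{m_t})` and let `f : R^{t+1} → R` be the `R`-linear map sending
the `i`-th standard basis vector to `(-1)^i` times the `i`-th maximal minor of `M_E`
(rows indexed by `Fin (t+1)`; the `0`-indexed row `i` is the `1`-indexed row `i+1`, whence the
sign `(-1)^(i+1)`).  Then `M_E : R^t → R^{t+1}` is injective, `ker f = range M_E`, and
`range f = E`; i.e. `0 → R^t → R^{t+1} → E → 0` is a free resolution of `E`. -/
theorem stmt2 (k : Type*) [Field k] (t : ℕ) (ht : 1 ≤ t) (m : ℕ → ℕ)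
    (hm0 : m 0 = 0) (hmono : ∀ i, i < t → m i ≤ m (i + 1))
    (E : Ideal (MvPolynomial (Fin 2) k))
    (hE : E = Ideal.span
      ((fun i : ℕ => (X 0 : MvPolynomial (Fin 2) k) ^ (t - i) * X 1 ^ (m i)) '' Set.Iic t))
    (M : Matrix (Fin (t + 1)) (Fin t) (MvPolynomial (Fin 2) k))
    (hM : M = fun (i : Fin (t + 1)) (j : Fin t) =>
      if (i : ℕ) = (j : ℕ) then (X 1 : MvPolynomial (Fin 2) k) ^ (m ((j : ℕ) + 1) - m (j : ℕ))
      else if (i : ℕ) = (j : ℕ) + 1 then -X 0 else 0)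
    (f : (Fin (t + 1) → MvPolynomial (Fin 2) k) →ₗ[MvPolynomial (Fin 2) k]
          MvPolynomial (Fin 2) k)
    (hf : ∀ i : Fin (t + 1), f (Pi.single i 1) =
      (-1) ^ ((i : ℕ) + 1) * (M.submatrix i.succAbove id).det) :
    Function.Injective M.mulVecLin ∧
    LinearMap.ker f = LinearMap.range M.mulVecLin ∧
    LinearMap.range f = E :=
  stmt2_general k t m hm0 hmono E hE M hM f hf
end

section
/- For every 1 ≤ i ≤ t+1, the i-th maximal minor of the spread-out matrix 𝓜 is a bihomogeneous element of k[𝐚][x,y] of bidegree (t+1−i, m_{i−1}) with respect to the ℤ²-grading. -/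
/-!
With rows and columns indexed from `0`, the entry of `𝓜` in row `r` and column `c` is
bihomogeneous of degree `ρ r + γ c`, where `ρ r = (r, -m_r)` and `γ c = (-c, m_{c+1})`
(`rowDeg` and `colDeg` below): this holds for `y^{d}` on the diagonal, `-x` below it, and
each `a_{r,c,k} y^k`. Hence every term of the Leibniz expansion of the minor omitting row `i`
has degree `∑_{r ≠ i} ρ r + ∑_c γ c`, and since `ρ (c + 1) + γ c = (1, 0)` this
telescopes to `ρ 0 - ρ i + (t, 0) = (t - i, m_i)`.
-/

open MvPolynomial

noncomputable section

namespace Stmt3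

variable (k : Type*) [Field k] (t : ℕ) (m : ℕ → ℕ)

/-- `D m j = d_{j+1} = m_{j+1} - m_j` (`0`-indexed version of the column degrees `d`). -/
def D (j : ℕ) : ℕ := m (j + 1) - m j

/-- The bound on the exponent index `k` of a parameter `a_{i,j,k}` sitting in (0-indexed) row
`i` and column `j`: it is `d_j` below the diagonal (`i > j`) and `d_i` on or above it. -/
def bound (i j : ℕ) : ℕ := if j < i then D m j else D m i

/-- Index type for the parameters `𝐚 = (a_{i,j,k})` of the spread-out matrix: triples
(0-indexed) `(i, j, k)` with `i ≤ t`, `j < t` and `k < bound i j`. -/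
def Idx : Type := {v : ℕ × ℕ × ℕ // v.1 ≤ t ∧ v.2.1 < t ∧ v.2.2 < bound m v.1 v.2.1}

/-- The ring `k[𝐚][x,y]`, realized as a polynomial ring in the variables `x, y`
(the two elements of `Fin 2`) and the `a_{i,j,k}` (the elements of `Idx t m`). -/
abbrev S : Type _ := MvPolynomial ((Fin 2) ⊕ (Idx t m)) k

/-- The variable `x`. -/
def xv : S k t m := X (Sum.inl 0)

/-- The variable `y`. -/
def yv : S k t m := X (Sum.inl 1)

/-- The entry perturbation `a_{i,j} = Σ_k a_{i,j,k} y^k`. -/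
def aij (i : Fin (t + 1)) (j : Fin t) : S k t m :=
  ∑ k' ∈ (Finset.range (bound m (i : ℕ) (j : ℕ))).attach,
    X (Sum.inr (⟨((i : ℕ), (j : ℕ), (k' : ℕ)),
        ⟨Nat.lt_succ_iff.mp i.isLt, j.isLt, Finset.mem_range.mp k'.2⟩⟩ : Idx t m))
      * yv k t m ^ (k' : ℕ)

/-- The spread-out matrix `𝓜`: the Hilbert–Burch matrix `M_E` (with `y^{d_j}` on the diagonal
and `-x` below it) perturbed by the `a_{i,j}`. -/
def spreadMatrix : Matrix (Fin (t + 1)) (Fin t) (S k t m) :=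
  fun i j =>
    (if (i : ℕ) = (j : ℕ) then yv k t m ^ D m (j : ℕ)
      else if (i : ℕ) = (j : ℕ) + 1 then -xv k t m else 0)
    + aij k t m i j

/-- The `ℤ²`-grading: `deg x = (1,0)`, `deg y = (0,1)` and
`deg a_{i,j,k} = (i - j, m_j - m_{i-1} - k)` (in the 0-indexed coordinates used here, the
parameter stored as `(i', j', k)` has degree `(i' - j', m_{j'+1} - m_{i'} - k)`). -/
def wt : ((Fin 2) ⊕ (Idx t m)) → ℤ × ℤ :=
  Sum.elim (fun i => if i = 0 then ((1 : ℤ), (0 : ℤ)) else ((0 : ℤ), (1 : ℤ)))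
    (fun v => ((v.1.1 : ℤ) - (v.1.2.1 : ℤ),
      (m (v.1.2.1 + 1) : ℤ) - (m v.1.1 : ℤ) - (v.1.2.2 : ℤ)))


def rowDeg (r : ℕ) : ℤ × ℤ := ((r : ℤ), -(m r : ℤ))

def colDeg (c : ℕ) : ℤ × ℤ := (-(c : ℤ), (m (c + 1) : ℤ))

theorem _root_.MvPolynomial.IsWeightedHomogeneous.det {σ R M n : Type*} [CommRing R]
    [AddCommMonoid M] [Fintype n] [DecidableEq n] {w : σ → M}
    {A : Matrix n n (MvPolynomial σ R)} {a b : n → M}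
    (hA : ∀ i j, IsWeightedHomogeneous w (A i j) (a i + b j)) :
    IsWeightedHomogeneous w A.det (∑ i, a i + ∑ j, b j) := by
  rw [Matrix.det_apply']
  refine IsWeightedHomogeneous.sum _ _ _ fun τ _ => ?_
  rw [← map_intCast (C : R →+* MvPolynomial σ R)]
  refine IsWeightedHomogeneous.C_mul ?_ _
  have hdeg : ∑ j, (a (τ j) + b j) = ∑ i, a i + ∑ j, b j := by
    rw [Finset.sum_add_distrib, Equiv.sum_comp τ a]
  exact hdeg ▸ IsWeightedHomogeneous.prod _ _ _ fun j _ => hA (τ j) j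

lemma rowDeg_succ_add_colDeg (c : ℕ) : rowDeg m (c + 1) + colDeg m c = (1, 0) := by
  ext <;> simp [rowDeg, colDeg]

lemma isWeightedHomogeneous_xv : IsWeightedHomogeneous (wt t m) (xv k t m) (1, 0) :=
  isWeightedHomogeneous_X k (wt t m) (Sum.inl 0)

lemma isWeightedHomogeneous_yv_pow (n : ℕ) :
    IsWeightedHomogeneous (wt t m) (yv k t m ^ n) (0, (n : ℤ)) := by
  simpa [yv, wt] using (isWeightedHomogeneous_X k (wt t m) (Sum.inl 1)).pow n

lemma isWeightedHomogeneous_aij (i : Fin (t + 1)) (j : Fin t) :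
    IsWeightedHomogeneous (wt t m) (aij k t m i j) (rowDeg m i + colDeg m j) := by
  refine IsWeightedHomogeneous.sum _ _ _ fun e _ => ?_
  have ha := isWeightedHomogeneous_X k (wt t m) (Sum.inr ⟨((i : ℕ), (j : ℕ), (e : ℕ)),
    Nat.lt_succ_iff.mp i.isLt, j.isLt, Finset.mem_range.mp e.2⟩)
  convert ha.mul (isWeightedHomogeneous_yv_pow k t m e) using 1
  · rfl
  · ext <;> simp [wt, rowDeg, colDeg, Sum.elim] <;> ring

lemma isWeightedHomogeneous_spreadMatrix (hmono : ∀ i, i < t → m i ≤ m (i + 1))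
    (i : Fin (t + 1)) (j : Fin t) :
    IsWeightedHomogeneous (wt t m) (spreadMatrix k t m i j) (rowDeg m i + colDeg m j) := by
  refine IsWeightedHomogeneous.add ?_ (isWeightedHomogeneous_aij k t m i j)
  split_ifs with hdiag hsub
  · convert isWeightedHomogeneous_yv_pow k t m (D m j) using 1
    have := hmono j j.isLt
    ext <;> simp [rowDeg, colDeg, D, hdiag, Nat.cast_sub this]; ring
  · rw [hsub, rowDeg_succ_add_colDeg]
    exact (isWeightedHomogeneous_xv k t m).neg
  · exact isWeightedHomogeneous_zero k _ _

lemma sum_rowDeg_succAbove_add_sum_colDeg (hm0 : m 0 = 0) (i : Fin (t + 1)) :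
    ∑ r : Fin t, rowDeg m (i.succAbove r) + ∑ c : Fin t, colDeg m c =
      ((t : ℤ) - i, (m i : ℤ)) := by
  have hrows := Fin.sum_univ_succAbove (fun r : Fin (t + 1) => rowDeg m r) i
  have hshift := Fin.sum_univ_succ (fun r : Fin (t + 1) => rowDeg m r)
  have hcols : ∑ c : Fin t, (rowDeg m (c + 1) + colDeg m c) = ((t : ℤ), 0) := by
    simp [rowDeg_succ_add_colDeg]
  simp only [Fin.val_zero, Fin.val_succ, Finset.sum_add_distrib] at hshift hcols
  have hends : rowDeg m 0 - rowDeg m i + ((t : ℤ), 0) = ((t : ℤ) - i, (m i : ℤ)) := by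
    ext <;> simp [rowDeg, hm0]; ring
  linear_combination hcols + hshift - hrows + hends

theorem stmt3 (hm0 : m 0 = 0) (hmono : ∀ i, i < t → m i ≤ m (i + 1)) :
    ∀ i : Fin (t + 1),
      IsWeightedHomogeneous (wt t m)
        (((spreadMatrix k t m).submatrix i.succAbove id).det)
        ((t : ℤ) - (i : ℕ), (m (i : ℕ) : ℤ)) := by
  intro i
  rw [← sum_rowDeg_succAbove_add_sum_colDeg t m hm0 i]
  exact IsWeightedHomogeneous.det fun r c =>
    isWeightedHomogeneous_spreadMatrix k t m hmono (i.succAbove r) c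

end Stmt3
end
end

section
/- Let a, b ∈ k with a ≠ 0 and b ≠ 0, and let I be the ideal of k[x,y] generated by x² − bxy², xy³, and y³ + axy² − aby⁴. Then the images of the seven monomials 1, y, y², y³, x, xy, xy² in the quotient ring k[x,y]/I are linearly independent over k; in particular dim_k k[x,y]/I ≥ 7, whereas dim_k k[x,y]/(x², y³) = 6. -/
/-!
Polynomials `fᵢ` have linearly independent images in `R ⧸ (s)` as soon as, in some `R`-module
on which the generators in `s` kill a vector `v`, the vectors `fᵢ • v` are independent. For `I`
take `k⁷`, with `x` and `y` acting by the multiplication table of `k[x,y]/I` in the basis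
`1, y, y², y³, x, xy, xy²`, and `v = 1`: the seventh dimension, beyond the six of the local
algebra at the origin, comes from the point `(0, 1/(ab))` of `V(I)`. For `(x², y³)` the
analogous model `k⁶` makes the six standard monomials independent, and they span because every
other monomial is a multiple of `x²` or `y³`.
-/

open MvPolynomial

namespace MvPolynomial

variable {σ k A : Type*} [CommSemiring k] [Semiring A] [Algebra k A]

open scoped IsMulCommutative in
noncomputable def aevalOfCommute (a : σ → A) (h : ∀ i j, Commute (a i) (a j)) :
    MvPolynomial σ k →ₐ[k] A :=
  have : IsMulCommutative (Algebra.adjoin k (Set.range a)) :=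
    Algebra.isMulCommutative_adjoin k (by rintro _ ⟨i, rfl⟩ _ ⟨j, rfl⟩; exact h i j)
  (Algebra.adjoin k (Set.range a)).val.comp
    (aeval fun i => ⟨a i, Algebra.subset_adjoin ⟨i, rfl⟩⟩)

@[simp]
theorem aevalOfCommute_X (a : σ → A) (h : ∀ i j, Commute (a i) (a j)) (i : σ) :
    aevalOfCommute (k := k) a h (X i) = a i := by
  simp [aevalOfCommute]

end MvPolynomial

section Annihilator

variable {R A M : Type*} [CommSemiring R] [Semiring A] [AddCommMonoid M] [Module A M]

theorem smul_eq_zero_of_mem_ideal_span (φ : R →+* A) {v : M} {s : Set R}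
    (hs : ∀ g ∈ s, φ g • v = 0) {p : R} (hp : p ∈ Ideal.span s) : φ p • v = 0 := by
  induction hp using Submodule.span_induction with
  | mem g hg => exact hs g hg
  | zero => simp
  | add p q _ _ hp hq => simp [add_smul, hp, hq]
  | smul r p _ hp => simp [mul_smul, hp]

end Annihilator

namespace Ideal.Quotient

theorem linearIndependent_mk_of_smul {k R A M : Type*} [CommRing k] [CommRing R] [Ring A]
    [AddCommGroup M] [Module A M] [Algebra k R] [Algebra k A] [Module k M] [IsScalarTower k A M]
    (φ : R →ₐ[k] A) (v : M) {s : Set R} (hs : ∀ g ∈ s, φ g • v = 0) {ι : Type*} (f : ι → R)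
    (hf : LinearIndependent k fun i => φ (f i) • v) :
    LinearIndependent k fun i => mk (span s) (f i) := by
  let L : R →ₗ[k] M := (LinearMap.toSpanSingleton A M v).restrictScalars k ∘ₗ φ.toLinearMap
  let L' := ((span s).restrictScalars k).liftQ L
      (fun p hp => smul_eq_zero_of_mem_ideal_span φ.toRingHom hs hp) ∘ₗ
    (Submodule.Quotient.restrictScalarsEquiv k (span s)).symm.toLinearMap
  exact hf.of_comp L'

theorem span_eq_top_of_mk_monomial_mem {k σ : Type*} [CommRing k] {I : Ideal (MvPolynomial σ k)}
    {s : Set (MvPolynomial σ k ⧸ I)} (h : ∀ m, mk I (monomial m 1) ∈ Submodule.span k s) :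
    Submodule.span k s = ⊤ := by
  rw [eq_top_iff]
  rintro q -
  obtain ⟨p, rfl⟩ := mk_surjective q
  induction p using MvPolynomial.induction_on' with
  | monomial m c =>
    rw [← mul_one c, ← smul_eq_mul, ← smul_monomial, ← mkₐ_eq_mk k, map_smul]
    exact Submodule.smul_mem _ c (h m)
  | add p q hp hq => simpa only [map_add] using Submodule.add_mem _ hp hq

end Ideal.Quotient

section Models

variable {k : Type*} [Field k]

section Deformed

local notation "e" => Pi.basisFun k (Fin 7)

noncomputable def deformedMulX (b : k) : Module.End k (Fin 7 → k) :=
  (Pi.basisFun k (Fin 7)).constr k ![e 4, e 5, e 6, 0, b • e 6, 0, 0]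

/-- The image of `y³` is `y⁴ = (ab)⁻¹ y³ + b⁻¹ xy²`, the third generator solved for `y⁴`. -/
noncomputable def deformedMulY (a b : k) : Module.End k (Fin 7 → k) :=
  (Pi.basisFun k (Fin 7)).constr k ![e 1, e 2, e 3, (a * b)⁻¹ • e 3 + b⁻¹ • e 6, e 5, e 6, 0]

theorem commute_deformedMulX_deformedMulY (a b : k) :
    Commute (deformedMulX b) (deformedMulY a b) := by
  refine (Pi.basisFun k (Fin 7)).ext fun i => ?_
  -- keeping `e i` folded lets `constr_basis` evaluate both maps on basis vectors
  fin_cases i <;>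
    simp [deformedMulX, deformedMulY, -Pi.basisFun_apply, -Module.Basis.constr_apply_fintype]

noncomputable def deformedAeval (a b : k) :
    MvPolynomial (Fin 2) k →ₐ[k] Module.End k (Fin 7 → k) :=
  aevalOfCommute ![deformedMulX b, deformedMulY a b] (by
    simp [Fin.forall_fin_two, commute_deformedMulX_deformedMulY,
      (commute_deformedMulX_deformedMulY a b).symm])

theorem deformedAeval_smul_eq_zero {a b : k} (ha : a ≠ 0) (hb : b ≠ 0) :
    ∀ g ∈ ({X 0 ^ 2 - C b * X 0 * X 1 ^ 2, X 0 * X 1 ^ 3,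
      X 1 ^ 3 + C a * X 0 * X 1 ^ 2 - C (a * b) * X 1 ^ 4} : Set (MvPolynomial (Fin 2) k)),
      deformedAeval a b g • e 0 = 0 := by
  rintro g (rfl | rfl | rfl) <;>
    simp [deformedAeval, deformedMulX, deformedMulY, pow_succ, smul_smul, ha, hb,
      -Pi.basisFun_apply, -Module.Basis.constr_apply_fintype]

theorem deformedAeval_monomials_smul (a b : k) :
    (fun i => deformedAeval a b (![1, X 1, X 1 ^ 2, X 1 ^ 3, X 0, X 0 * X 1, X 0 * X 1 ^ 2] i) •
      e 0) = e := by
  funext i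
  fin_cases i <;>
    simp [deformedAeval, deformedMulX, deformedMulY, pow_succ,
      -Pi.basisFun_apply, -Module.Basis.constr_apply_fintype]

end Deformed

section MonomialIdeal

local notation "e" => Pi.basisFun k (Fin 6)

noncomputable def monomialMulX : Module.End k (Fin 6 → k) :=
  (Pi.basisFun k (Fin 6)).constr k ![e 3, e 4, e 5, 0, 0, 0]

noncomputable def monomialMulY : Module.End k (Fin 6 → k) :=
  (Pi.basisFun k (Fin 6)).constr k ![e 1, e 2, 0, e 4, e 5, 0]

theorem commute_monomialMulX_monomialMulY : Commute (monomialMulX (k := k)) monomialMulY := by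
  refine (Pi.basisFun k (Fin 6)).ext fun i => ?_
  fin_cases i <;>
    simp [monomialMulX, monomialMulY, -Pi.basisFun_apply, -Module.Basis.constr_apply_fintype]

noncomputable def monomialAeval : MvPolynomial (Fin 2) k →ₐ[k] Module.End k (Fin 6 → k) :=
  aevalOfCommute ![monomialMulX, monomialMulY] (by
    simp [Fin.forall_fin_two, commute_monomialMulX_monomialMulY,
      commute_monomialMulX_monomialMulY.symm])

theorem monomialAeval_smul_eq_zero :
    ∀ g ∈ ({X 0 ^ 2, X 1 ^ 3} : Set (MvPolynomial (Fin 2) k)), monomialAeval g • e 0 = 0 := by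
  rintro g (rfl | rfl) <;>
    simp [monomialAeval, monomialMulX, monomialMulY, pow_succ,
      -Pi.basisFun_apply, -Module.Basis.constr_apply_fintype]

theorem monomialAeval_monomials_smul :
    (fun i => monomialAeval
        (![1, X 1, X 1 ^ 2, X 0, X 0 * X 1, X 0 * X 1 ^ 2] i : MvPolynomial (Fin 2) k) • e 0) =
      e := by
  funext i
  fin_cases i <;>
    simp [monomialAeval, monomialMulX, monomialMulY, pow_succ,
      -Pi.basisFun_apply, -Module.Basis.constr_apply_fintype]

end MonomialIdeal

theorem span_standard_monomials_eq_top {I : Ideal (MvPolynomial (Fin 2) k)}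
    (hx : X 0 ^ 2 ∈ I) (hy : X 1 ^ 3 ∈ I) :
    Submodule.span k (Set.range fun i =>
      Ideal.Quotient.mk I (![1, X 1, X 1 ^ 2, X 0, X 0 * X 1, X 0 * X 1 ^ 2] i)) = ⊤ := by
  refine Ideal.Quotient.span_eq_top_of_mk_monomial_mem fun m => ?_
  have hm : monomial m (1 : k) = X 0 ^ m 0 * X 1 ^ m 1 := by
    rw [monomial_eq, Finsupp.prod_fintype _ _ (by simp), Fin.prod_univ_two, C_1, one_mul]
  rw [hm]
  by_cases h0 : 2 ≤ m 0
  · rw [Ideal.Quotient.eq_zero_iff_mem.2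
      (I.mem_of_dvd (dvd_mul_of_dvd_left (pow_dvd_pow _ h0) _) hx)]
    exact zero_mem _
  by_cases h1 : 3 ≤ m 1
  · rw [Ideal.Quotient.eq_zero_iff_mem.2
      (I.mem_of_dvd (dvd_mul_of_dvd_right (pow_dvd_pow _ h1) _) hy)]
    exact zero_mem _
  generalize m 0 = i at h0
  generalize m 1 = j at h1
  interval_cases i <;> interval_cases j
  exacts [Submodule.subset_span ⟨0, by simp⟩, Submodule.subset_span ⟨1, by simp⟩,
    Submodule.subset_span ⟨2, by simp⟩, Submodule.subset_span ⟨3, by simp⟩,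
    Submodule.subset_span ⟨4, by simp⟩, Submodule.subset_span ⟨5, by simp⟩]

theorem finrank_quotient_span_X_sq_X_cube :
    Module.finrank k (MvPolynomial (Fin 2) k ⧸
      Ideal.span {(X 0 : MvPolynomial (Fin 2) k) ^ 2, X 1 ^ 3}) = 6 := by
  have hindep : LinearIndependent k fun i => Ideal.Quotient.mk (Ideal.span {X 0 ^ 2, X 1 ^ 3})
      (![1, X 1, X 1 ^ 2, X 0, X 0 * X 1, X 0 * X 1 ^ 2] i : MvPolynomial (Fin 2) k) :=
    Ideal.Quotient.linearIndependent_mk_of_smul monomialAeval _ monomialAeval_smul_eq_zero _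
      (by rw [monomialAeval_monomials_smul]; exact (Pi.basisFun k (Fin 6)).linearIndependent)
  have hspan := span_standard_monomials_eq_top
    (I := Ideal.span {(X 0 : MvPolynomial (Fin 2) k) ^ 2, X 1 ^ 3})
    (Ideal.subset_span (by simp)) (Ideal.subset_span (by simp))
  rw [← finrank_top, ← hspan, finrank_span_eq_card hindep, Fintype.card_fin]

end Models

/-- For `a ≠ 0 ≠ b` and `I = (x² − bxy², xy³, y³ + axy² − aby⁴)`, the images of
`1, y, y², y³, x, xy, xy²` in `k[x,y]/I` are `k`-linearly independent; in particular
`dim_k k[x,y]/I ≥ 7`, whereas `dim_k k[x,y]/(x², y³) = 6`. -/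
theorem stmt9 (k : Type*) [Field k] (a b : k) (ha : a ≠ 0) (hb : b ≠ 0)
    (I : Ideal (MvPolynomial (Fin 2) k))
    (hI : I = Ideal.span {(X 0 : MvPolynomial (Fin 2) k) ^ 2 - C b * X 0 * X 1 ^ 2,
        X 0 * X 1 ^ 3, X 1 ^ 3 + C a * X 0 * X 1 ^ 2 - C (a * b) * X 1 ^ 4}) :
    LinearIndependent k (fun i : Fin 7 => Ideal.Quotient.mk I
      (![1, X 1, X 1 ^ 2, X 1 ^ 3, X 0, X 0 * X 1, X 0 * X 1 ^ 2] i)) ∧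
    7 ≤ Module.rank k (MvPolynomial (Fin 2) k ⧸ I) ∧
    Module.finrank k (MvPolynomial (Fin 2) k ⧸
        Ideal.span {(X 0 : MvPolynomial (Fin 2) k) ^ 2, X 1 ^ 3}) = 6 := by
  subst hI
  have hindep := Ideal.Quotient.linearIndependent_mk_of_smul (deformedAeval a b) _
    (deformedAeval_smul_eq_zero ha hb) _
    (by rw [deformedAeval_monomials_smul]; exact (Pi.basisFun k (Fin 7)).linearIndependent)
  exact ⟨hindep, by simpa using hindep.cardinal_lift_le_rank, finrank_quotient_span_X_sq_X_cube⟩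
end

section
/- Let f_first and f_last denote the maximal minors of the spread-out matrix 𝓜 obtained by deleting the first row, respectively the (t+1)-st row, regarded as polynomials in x over k[𝐚][y], and let res_E ∈ k[𝐚][y] be their resultant with respect to x (the determinant of their Sylvester matrix). Then res_E is bihomogeneous of bidegree (0, t·m_t) with respect to the ℤ²-grading; in particular, specializing all variables a_{i,j,k} to 0, res_E becomes ± y^{t·m_t}. -/
open MvPolynomial

noncomputable section

namespace Stmt11

/-- The Sylvester matrix of two polynomials `p, q ∈ T[x]` of formal degrees `n` and `m`
respectively: a square matrix of size `m + n` whose first `m` columns carry the coefficients of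
`p` and whose last `n` columns carry the coefficients of `q` (ascending order, shifted copies).
Its determinant is the resultant `res_x(p, q)`. -/
def sylvester {T : Type*} [CommRing T] (n m : ℕ) (p q : Polynomial T) :
    Matrix (Fin (m + n)) (Fin (m + n)) T :=
  fun i j =>
    if (j : ℕ) < m then
      (if (j : ℕ) ≤ (i : ℕ) then p.coeff ((i : ℕ) - (j : ℕ)) else 0)
    else
      (if (j : ℕ) - m ≤ (i : ℕ) then q.coeff ((i : ℕ) - ((j : ℕ) - m)) else 0)

variable (k : Type*) [Field k] (t : ℕ) (m : ℕ → ℕ)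

/-- `D m j = d_{j+1} = m_{j+1} - m_j` (`0`-indexed version of the column degrees `d`). -/
def D (j : ℕ) : ℕ := m (j + 1) - m j

/-- The bound on the exponent index `k` of a parameter `a_{i,j,k}` sitting in (0-indexed) row
`i` and column `j`: it is `d_j` below the diagonal (`i > j`) and `d_i` on or above it. -/
def bound (i j : ℕ) : ℕ := if j < i then D m j else D m i

/-- Index type for the parameters `𝐚 = (a_{i,j,k})` of the spread-out matrix: triples
(0-indexed) `(i, j, k)` with `i ≤ t`, `j < t` and `k < bound i j`. -/
def Idx : Type := {v : ℕ × ℕ × ℕ // v.1 ≤ t ∧ v.2.1 < t ∧ v.2.2 < bound m v.1 v.2.1}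

/-- The coefficient ring `T = k[𝐚][y]`, realized as a polynomial ring in `y` (indexed by
`Unit`) and the `a_{i,j,k}` (indexed by `Idx t m`); `k[𝐚][x,y]` is then `T[x] = Polynomial T`
with `x` the polynomial variable. -/
abbrev T : Type _ := MvPolynomial (Unit ⊕ (Idx t m)) k

/-- The variable `y` of `T = k[𝐚][y]`. -/
def yv : T k t m := X (Sum.inl ())

/-- The entry perturbation `a_{i,j} = Σ_k a_{i,j,k} y^k ∈ k[𝐚][y]`. -/
def aij (i : Fin (t + 1)) (j : Fin t) : T k t m :=
  ∑ k' ∈ (Finset.range (bound m (i : ℕ) (j : ℕ))).attach,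
    X (Sum.inr (⟨((i : ℕ), (j : ℕ), (k' : ℕ)),
        ⟨Nat.lt_succ_iff.mp i.isLt, j.isLt, Finset.mem_range.mp k'.2⟩⟩ : Idx t m))
      * yv k t m ^ (k' : ℕ)

/-- The spread-out matrix `𝓜`, over `k[𝐚][y][x] = Polynomial (T k t m)`: the Hilbert–Burch
matrix `M_E` (with `y^{d_j}` on the diagonal and `-x` below it) perturbed by the `a_{i,j}`. -/
def spreadMatrix : Matrix (Fin (t + 1)) (Fin t) (Polynomial (T k t m)) :=
  fun i j =>
    (if (i : ℕ) = (j : ℕ) then Polynomial.C (yv k t m ^ D m (j : ℕ))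
      else if (i : ℕ) = (j : ℕ) + 1 then -Polynomial.X else 0)
    + Polynomial.C (aij k t m i j)

/-- The maximal minor of `𝓜` obtained by deleting the first row, a monic polynomial of degree
`t` in `x` over `k[𝐚][y]`. -/
def fFirst : Polynomial (T k t m) :=
  ((spreadMatrix k t m).submatrix (Fin.succAbove 0) id).det

/-- The maximal minor of `𝓜` obtained by deleting the `(t+1)`-st (last) row, a polynomial of
degree at most `t - 1` in `x` over `k[𝐚][y]`. -/
def fLast : Polynomial (T k t m) :=
  ((spreadMatrix k t m).submatrix (Fin.succAbove (Fin.last t)) id).det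

/-- The resultant `res_E ∈ k[𝐚][y]` of `f_first` and `f_last` with respect to `x`: the
determinant of their Sylvester matrix (of formal degrees `t` and `t - 1` in `x`). -/
def resE : T k t m := (sylvester t (t - 1) (fFirst k t m) (fLast k t m)).det

/-- The `ℤ²`-grading on `k[𝐚][y]`: `deg y = (0,1)` and
`deg a_{i,j,k} = (i - j, m_j - m_{i-1} - k)` (in the 0-indexed coordinates used here, the
parameter stored as `(i', j', k)` has degree `(i' - j', m_{j'+1} - m_{i'} - k)`). -/
def wt : (Unit ⊕ (Idx t m)) → ℤ × ℤ :=
  Sum.elim (fun _ => ((0 : ℤ), (1 : ℤ)))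
    (fun v => ((v.1.1 : ℤ) - (v.1.2.1 : ℤ),
      (m (v.1.2.1 + 1) : ℤ) - (m v.1.1 : ℤ) - (v.1.2.2 : ℤ)))

/-- Specialization of all the parameters `a_{i,j,k}` to `0` (and `y` to itself), a `k`-algebra
map `k[𝐚][y] → k[y]`. -/
def spec : T k t m →ₐ[k] Polynomial k :=
  aeval (Sum.elim (fun _ => (Polynomial.X : Polynomial k)) (fun _ => 0))

end Stmt11

/-!
Give `x` the weight `(1, 0)`. The entry `𝓜_{i,j}` is then bihomogeneous of weight
`(i, -m_{i-1}) + (-j, m_j)`, a row weight plus a column weight, so every term of the Leibniz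
expansion of a minor has the same weight: `f_first` has weight `(t, 0)` and `f_last` weight
`(0, m_t)`. The `x`-coefficients of such polynomials fill the Sylvester matrix with entries whose
weights again split as row weight plus column weight, so `res_E` is bihomogeneous, of weight
`(0, t·m_t)`. Setting every `a_{i,j,k}` to `0` turns `𝓜` into `M_E`, whose two minors are
`(-x)^t` (upper triangular) and `y^{m_t}` (lower triangular); their resultant is `y^{t·m_t}`.
-/

open scoped Polynomial

theorem Matrix.det_mem_graded {ι n A S : Type*} [AddCommMonoid ι] [Fintype n] [DecidableEq n]
    [CommRing A] [SetLike S A] [AddSubgroupClass S A] (𝒜 : ι → S) [SetLike.GradedMonoid 𝒜]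
    (M : Matrix n n A) (ρ γ : n → ι) (h : ∀ i j, M i j ∈ 𝒜 (ρ i + γ j)) :
    M.det ∈ 𝒜 (∑ i, ρ i + ∑ j, γ j) := by
  rw [Matrix.det_apply]
  refine sum_mem fun σ _ => ?_
  rw [Units.smul_def]
  refine zsmul_mem ?_ _
  have hdeg : ∑ i, ρ i + ∑ j, γ j = ∑ j, (ρ (σ j) + γ j) := by
    rw [Finset.sum_add_distrib, Equiv.sum_comp σ ρ]
  rw [hdeg]
  exact SetLike.prod_mem_graded 𝒜 _ _ fun j _ => h (σ j) j

namespace Polynomial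

variable {R σ M : Type*} [CommRing R] [AddCommGroup M]

/-- Weighted homogeneity of degree `a` for `(MvPolynomial σ R)[X]`, the variable `X` getting the
weight `e`. -/
def xHomogeneous (w : σ → M) (e a : M) : AddSubgroup (MvPolynomial σ R)[X] where
  carrier := {p | ∀ n : ℕ, p.coeff n ∈ weightedHomogeneousSubmodule R w (a - n • e)}
  zero_mem' _ := by simp
  add_mem' hp hq n := by simpa using add_mem (hp n) (hq n)
  neg_mem' hp n := by simpa using neg_mem (hp n)

variable {w : σ → M} {e a : M}

instance xHomogeneous.gradedMonoid :
    SetLike.GradedMonoid (xHomogeneous (R := R) w e) where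
  one_mem n := by
    rcases eq_or_ne n 0 with rfl | hn
    · simpa using isWeightedHomogeneous_one R w
    · simp [coeff_one, hn]
  mul_mem a b p q hp hq n := by
    rw [Polynomial.coeff_mul]
    refine sum_mem fun uv huv => ?_
    have hdeg : a + b - n • e = (a - uv.1 • e) + (b - uv.2 • e) := by
      rw [← Finset.HasAntidiagonal.mem_antidiagonal.mp huv, add_nsmul]
      abel
    rw [hdeg]
    exact (hp uv.1).mul (hq uv.2)

theorem C_mem_xHomogeneous {c : MvPolynomial σ R} (hc : c ∈ weightedHomogeneousSubmodule R w a) :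
    C c ∈ xHomogeneous w e a := by
  intro n
  rcases eq_or_ne n 0 with rfl | hn
  · simpa using hc
  · simp [coeff_C, hn]

theorem X_mem_xHomogeneous : (X : (MvPolynomial σ R)[X]) ∈ xHomogeneous w e e := by
  intro n
  rcases eq_or_ne n 1 with rfl | hn
  · simpa using isWeightedHomogeneous_one R w
  · simp [coeff_X, Ne.symm hn]

end Polynomial

namespace Stmt11

attribute [local instance] MvPolynomial.WeightedHomogeneousSubmodule.gradedMonoid

section Sylvester

variable {R σ M : Type*} [CommRing R] [AddCommGroup M]

theorem sylvester_map {S F : Type*} [CommRing S] [FunLike F R S] [RingHomClass F R S] (f : F)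
    (n m : ℕ) (p q : R[X]) :
    (sylvester n m p q).map f = sylvester n m (p.map (f : R →+* S)) (q.map (f : R →+* S)) := by
  ext i j
  simp only [sylvester, Matrix.map_apply, Polynomial.coeff_map]
  split_ifs <;> simp

theorem sylvester_eq_polynomialSylvester {n m : ℕ} {p q : R[X]} (hp : p.natDegree ≤ n)
    (hq : q.natDegree ≤ m) : sylvester n m p q = Polynomial.sylvester q p m n := by
  ext i j
  induction j using Fin.addCases with
  | left j =>
    simp only [sylvester, Polynomial.sylvester, Matrix.of_apply, Fin.addCases_left,
      Fin.val_castAdd, j.isLt, if_true, Set.mem_Icc]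
    by_cases hij : (j : ℕ) ≤ i
    · have : n < i - j → p.coeff (i - j) = 0 := fun h =>
        Polynomial.coeff_eq_zero_of_natDegree_lt (hp.trans_lt h)
      split_ifs <;> grind
    · simp [hij]
  | right j =>
    simp only [sylvester, Polynomial.sylvester, Matrix.of_apply, Fin.addCases_right,
      Fin.val_natAdd, Set.mem_Icc, Nat.add_sub_cancel_left, show ¬ m + (j : ℕ) < m by omega,
      if_false]
    by_cases hij : (j : ℕ) ≤ i
    · have : m < i - j → q.coeff (i - j) = 0 := fun h =>
        Polynomial.coeff_eq_zero_of_natDegree_lt (hq.trans_lt h)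
      split_ifs <;> grind
    · simp [hij]

theorem sylvester_det_mem {w : σ → M} {e a b : M} {p q : (MvPolynomial σ R)[X]}
    (hp : p ∈ Polynomial.xHomogeneous w e a) (hq : q ∈ Polynomial.xHomogeneous w e b) (n m : ℕ) :
    (sylvester n m p q).det ∈ weightedHomogeneousSubmodule R w (m • a + n • b - (m * n) • e) := by
  let γ : Fin (m + n) → M := Fin.addCases (fun j => a + (j : ℕ) • e) (fun j => b + (j : ℕ) • e)
  have hdet := Matrix.det_mem_graded (weightedHomogeneousSubmodule R w) (sylvester n m p q)
    (fun i => -((i : ℕ) • e)) γ fun i j => by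
      induction j using Fin.addCases with
      | left j =>
        simp only [sylvester, Fin.val_castAdd, j.isLt, if_true, γ, Fin.addCases_left]
        split_ifs with hij
        · convert hp (i - j) using 2
          rw [sub_nsmul _ hij]
          abel
        · exact zero_mem _
      | right j =>
        simp only [sylvester, Fin.val_natAdd, show ¬ m + (j : ℕ) < m by omega, if_false,
          Nat.add_sub_cancel_left, γ, Fin.addCases_right]
        split_ifs with hij
        · convert hq (i - j) using 2
          rw [sub_nsmul _ hij]
          abel
        · exact zero_mem _
  convert hdet using 2
  rw [← Finset.sum_add_distrib, Fin.sum_univ_add]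
  simp only [γ, Fin.addCases_left, Fin.addCases_right, Fin.val_castAdd, Fin.val_natAdd,
    add_nsmul, neg_add, add_assoc, neg_add_cancel_comm_assoc, Finset.sum_const, Finset.card_univ,
    Fintype.card_fin, smul_add, smul_neg, mul_nsmul]
  abel

end Sylvester

section Weights

variable {k : Type*} [Field k] {t : ℕ} {m : ℕ → ℕ}

theorem aij_mem (i : Fin (t + 1)) (j : Fin t) :
    aij k t m i j ∈
      weightedHomogeneousSubmodule k (wt t m) ((i : ℤ) - j, (m (j + 1) : ℤ) - m i) := by
  refine sum_mem fun l _ => ?_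
  have hdeg : ((i : ℤ) - j, (m (j + 1) : ℤ) - m i) =
      wt t m (Sum.inr (⟨(i, j, l), Nat.lt_succ_iff.mp i.isLt, j.isLt,
        Finset.mem_range.mp l.2⟩ : Idx t m)) + (l : ℕ) • wt t m (Sum.inl ()) := by
    show _ = ((i : ℤ) - j, (m (j + 1) : ℤ) - m i - (l : ℕ)) + (l : ℕ) • ((0 : ℤ), (1 : ℤ))
    ext <;> simp
  rw [hdeg, mem_weightedHomogeneousSubmodule]
  exact (isWeightedHomogeneous_X k _ _).mul ((isWeightedHomogeneous_X k _ _).pow _)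

def rowWeight (m : ℕ → ℕ) (i : ℕ) : ℤ × ℤ := (i, -m i)

def colWeight (m : ℕ → ℕ) (j : ℕ) : ℤ × ℤ := (-j, m (j + 1))

theorem spreadMatrix_mem (hmono : ∀ i, i < t → m i ≤ m (i + 1)) (i : Fin (t + 1)) (j : Fin t) :
    spreadMatrix k t m i j ∈
      Polynomial.xHomogeneous (wt t m) (1, 0) (rowWeight m i + colWeight m j) := by
  have hdeg : rowWeight m i + colWeight m j = ((i : ℤ) - j, (m (j + 1) : ℤ) - m i) := by
    ext <;> simp [rowWeight, colWeight] <;> ring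
  refine add_mem ?_ (Polynomial.C_mem_xHomogeneous (hdeg ▸ aij_mem i j))
  split_ifs with hdiag hsub
  · have hdiag_deg : rowWeight m i + colWeight m j = D m j • wt t m (Sum.inl ()) := by
      rw [hdeg]
      ext <;> simp [wt, hdiag, D, Nat.cast_sub (hmono j j.isLt)]
    rw [hdiag_deg]
    exact Polynomial.C_mem_xHomogeneous ((isWeightedHomogeneous_X k _ _).pow _)
  · have hsub_deg : rowWeight m i + colWeight m j = (1, 0) := by
      rw [hdeg]
      ext <;> simp [hsub]
    rw [hsub_deg]
    exact neg_mem Polynomial.X_mem_xHomogeneous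
  · exact zero_mem _

theorem minor_mem (hmono : ∀ i, i < t → m i ≤ m (i + 1)) (r : Fin (t + 1)) :
    ((spreadMatrix k t m).submatrix r.succAbove id).det ∈ Polynomial.xHomogeneous (wt t m) (1, 0)
      (∑ i, rowWeight m (r.succAbove i) + ∑ j : Fin t, colWeight m j) :=
  Matrix.det_mem_graded _ _ _ _ fun _ _ => spreadMatrix_mem hmono _ _

theorem fFirst_mem (hmono : ∀ i, i < t → m i ≤ m (i + 1)) :
    fFirst k t m ∈ Polynomial.xHomogeneous (wt t m) (1, 0) ((t : ℤ), 0) := by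
  rw [fFirst]
  convert minor_mem hmono 0 using 2
  rw [← Finset.sum_add_distrib]
  ext <;> simp [rowWeight, colWeight]

theorem fLast_mem (hm0 : m 0 = 0) (hmono : ∀ i, i < t → m i ≤ m (i + 1)) :
    fLast k t m ∈ Polynomial.xHomogeneous (wt t m) (1, 0) (0, (m t : ℤ)) := by
  rw [fLast]
  convert minor_mem hmono (Fin.last t) using 2
  rw [← Finset.sum_add_distrib]
  ext
  · simp [rowWeight, colWeight, Prod.fst_sum]
  · simp only [rowWeight, colWeight, Fin.succAbove_last, Fin.val_castSucc, Prod.snd_sum,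
      Prod.snd_add, neg_add_eq_sub]
    rw [Fin.sum_univ_eq_sum_range (fun i => (m (i + 1) : ℤ) - m i) t,
      Finset.sum_range_sub (fun i => (m i : ℤ)), hm0]
    simp

theorem resE_isWeightedHomogeneous (hm0 : m 0 = 0) (hmono : ∀ i, i < t → m i ≤ m (i + 1)) :
    IsWeightedHomogeneous (wt t m) (resE k t m) ((0 : ℤ), (t * m t : ℤ)) := by
  have h := sylvester_det_mem (fFirst_mem (k := k) hmono) (fLast_mem hm0 hmono) t (t - 1)
  have hdeg : (t - 1) • ((t : ℤ), (0 : ℤ)) + t • (0, (m t : ℤ)) - ((t - 1) * t) • (1, 0) =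
      ((0 : ℤ), (t * m t : ℤ)) := by
    ext <;> simp
  rwa [hdeg] at h

end Weights

section Specialization

variable {k : Type*} [Field k] {t : ℕ} {m : ℕ → ℕ}

theorem sum_range_D (hm0 : m 0 = 0) (hmono : ∀ i, i < t → m i ≤ m (i + 1)) :
    ∑ i ∈ Finset.range t, D m i = m t := by
  zify
  rw [Finset.sum_congr rfl fun i hi =>
      show (D m i : ℤ) = m (i + 1) - m i from Nat.cast_sub (hmono i (Finset.mem_range.mp hi)),
    Finset.sum_range_sub (fun i => (m i : ℤ)), hm0, Nat.cast_zero, sub_zero]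

variable (k t m) in
def hilbertBurchMatrix : Matrix (Fin (t + 1)) (Fin t) k[X][X] :=
  fun i j =>
    if (i : ℕ) = j then Polynomial.C (Polynomial.X ^ D m j)
    else if (i : ℕ) = j + 1 then -Polynomial.X else 0

theorem spec_X_inr (v : Idx t m) : spec k t m (X (Sum.inr v)) = 0 := by
  simp [spec]

theorem map_spreadMatrix_spec :
    (spreadMatrix k t m).map (Polynomial.map (spec k t m : T k t m →+* k[X])) =
      hilbertBurchMatrix k t m := by
  ext i j : 2
  have hy : spec k t m (yv k t m) = Polynomial.X := by simp [spec, yv]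
  have ha : spec k t m (aij k t m i j) = 0 := by
    rw [aij, map_sum]
    exact Finset.sum_eq_zero fun _ _ =>
      (map_mul _ _ _).trans (mul_eq_zero_of_left (spec_X_inr _) _)
  simp only [spreadMatrix, hilbertBurchMatrix, Matrix.map_apply]
  split_ifs <;> simp [hy, ha]

theorem map_fFirst_spec :
    (fFirst k t m).map (spec k t m : T k t m →+* k[X]) = (-Polynomial.X) ^ t := by
  rw [fFirst, ← Polynomial.coe_mapRingHom, RingHom.map_det, RingHom.mapMatrix_apply,
    ← Matrix.submatrix_map, Polynomial.coe_mapRingHom, map_spreadMatrix_spec,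
    Matrix.det_of_isUpperTriangular]
  · simp [hilbertBurchMatrix]
  · intro i j hij
    simp only [Matrix.submatrix_apply, hilbertBurchMatrix, Fin.succAbove_zero, Fin.val_succ, id]
    have : (j : ℕ) < i := hij
    split_ifs <;> first | rfl | omega

theorem map_fLast_spec (hm0 : m 0 = 0) (hmono : ∀ i, i < t → m i ≤ m (i + 1)) :
    (fLast k t m).map (spec k t m : T k t m →+* k[X]) = Polynomial.C (Polynomial.X ^ m t) := by
  rw [fLast, ← Polynomial.coe_mapRingHom, RingHom.map_det, RingHom.mapMatrix_apply,
    ← Matrix.submatrix_map, Polynomial.coe_mapRingHom, map_spreadMatrix_spec,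
    Matrix.det_of_isLowerTriangular]
  · simp only [Matrix.submatrix_apply, hilbertBurchMatrix, Fin.succAbove_last, Fin.val_castSucc,
      id, if_true]
    rw [← map_prod, Finset.prod_pow_eq_pow_sum, Fin.sum_univ_eq_sum_range (D m),
      sum_range_D hm0 hmono]
  · intro i j hij
    simp only [Matrix.submatrix_apply, hilbertBurchMatrix, Fin.succAbove_last, Fin.val_castSucc, id]
    have : (i : ℕ) < j := hij
    split_ifs <;> first | rfl | omega

theorem spec_resE (hm0 : m 0 = 0) (hmono : ∀ i, i < t → m i ≤ m (i + 1)) :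
    spec k t m (resE k t m) = Polynomial.X ^ (t * m t) := by
  rw [resE, AlgHom.map_det, AlgHom.mapMatrix_apply, sylvester_map, map_fFirst_spec,
    map_fLast_spec hm0 hmono,
    sylvester_eq_polynomialSylvester (by simp) (by simp), ← Polynomial.resultant,
    Polynomial.resultant_C_left]
  have heven : Even ((t - 1) * t) := by simpa [mul_comm] using Nat.even_mul_pred_self t
  have hcoeff : ((-Polynomial.X : k[X][X]) ^ t).coeff t = (-1) ^ t := by
    rw [neg_pow (Polynomial.X : k[X][X]), Polynomial.coeff_mul_X_pow', if_pos le_rfl, Nat.sub_self,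
      ← Polynomial.C_1, ← Polynomial.C_neg, ← map_pow, Polynomial.coeff_C_zero]
  rw [hcoeff, ← pow_mul, mul_comm t (t - 1), heven.neg_one_pow, one_mul, one_mul, ← pow_mul,
    mul_comm]

end Specialization

variable (k : Type*) [Field k] (t : ℕ) (m : ℕ → ℕ)

theorem stmt11 (hm0 : m 0 = 0) (hmono : ∀ i, i < t → m i ≤ m (i + 1)) :
    IsWeightedHomogeneous (wt t m) (resE k t m) ((0 : ℤ), (t * m t : ℤ)) ∧
    (spec k t m (resE k t m) = Polynomial.X ^ (t * m t) ∨
      spec k t m (resE k t m) = -(Polynomial.X ^ (t * m t))) :=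
  ⟨resE_isWeightedHomogeneous hm0 hmono, .inl (spec_resE hm0 hmono)⟩

end Stmt11
end
end

section
/- Assume the characteristic of k is not 2. In k[x,y], the two ideals I₊ = (y¹³ + xy⁸, y¹² − x²y², x²y³ − xy⁸, x²y⁵ − x³) and I₋ = (y¹³ − xy⁸, −y¹² + x²y², x²y³ + xy⁸, −x²y⁵ − x³) are equal. -/
open MvPolynomial

noncomputable section

/-- If `char k ≠ 2`, then in `k[x,y]` the ideals
`I₊ = (y¹³ + xy⁸, y¹² − x²y², x²y³ − xy⁸, x²y⁵ − x³)` and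
`I₋ = (y¹³ − xy⁸, −y¹² + x²y², x²y³ + xy⁸, −x²y⁵ − x³)` coincide. -/
theorem stmt13 (k : Type*) [Field k] (hchar : (2 : k) ≠ 0) :
    Ideal.span ({(X 1 : MvPolynomial (Fin 2) k) ^ 13 + X 0 * X 1 ^ 8,
        X 1 ^ 12 - X 0 ^ 2 * X 1 ^ 2,
        X 0 ^ 2 * X 1 ^ 3 - X 0 * X 1 ^ 8,
        X 0 ^ 2 * X 1 ^ 5 - X 0 ^ 3} : Set (MvPolynomial (Fin 2) k))
      = Ideal.span ({(X 1 : MvPolynomial (Fin 2) k) ^ 13 - X 0 * X 1 ^ 8,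
        -X 1 ^ 12 + X 0 ^ 2 * X 1 ^ 2,
        X 0 ^ 2 * X 1 ^ 3 + X 0 * X 1 ^ 8,
        -(X 0 ^ 2 * X 1 ^ 5) - X 0 ^ 3} : Set (MvPolynomial (Fin 2) k)) := by
  set g1 : MvPolynomial (Fin 2) k := X 1 ^ 13 + X 0 * X 1 ^ 8 with hg1
  set g2 : MvPolynomial (Fin 2) k := X 1 ^ 12 - X 0 ^ 2 * X 1 ^ 2 with hg2
  set g3 : MvPolynomial (Fin 2) k := X 0 ^ 2 * X 1 ^ 3 - X 0 * X 1 ^ 8 with hg3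
  set g4 : MvPolynomial (Fin 2) k := X 0 ^ 2 * X 1 ^ 5 - X 0 ^ 3 with hg4
  set h1 : MvPolynomial (Fin 2) k := X 1 ^ 13 - X 0 * X 1 ^ 8 with hh1
  set h2 : MvPolynomial (Fin 2) k := -X 1 ^ 12 + X 0 ^ 2 * X 1 ^ 2 with hh2
  set h3 : MvPolynomial (Fin 2) k := X 0 ^ 2 * X 1 ^ 3 + X 0 * X 1 ^ 8 with hh3
  set h4 : MvPolynomial (Fin 2) k := -(X 0 ^ 2 * X 1 ^ 5) - X 0 ^ 3 with hh4
  have mg1 : g1 ∈ Ideal.span ({g1, g2, g3, g4} : Set (MvPolynomial (Fin 2) k)) :=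
    Ideal.subset_span (by simp)
  have mg2 : g2 ∈ Ideal.span ({g1, g2, g3, g4} : Set (MvPolynomial (Fin 2) k)) :=
    Ideal.subset_span (by simp)
  have mg3 : g3 ∈ Ideal.span ({g1, g2, g3, g4} : Set (MvPolynomial (Fin 2) k)) :=
    Ideal.subset_span (by simp)
  have mg4 : g4 ∈ Ideal.span ({g1, g2, g3, g4} : Set (MvPolynomial (Fin 2) k)) :=
    Ideal.subset_span (by simp)
  have mh1 : h1 ∈ Ideal.span ({h1, h2, h3, h4} : Set (MvPolynomial (Fin 2) k)) :=
    Ideal.subset_span (by simp)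
  have mh2 : h2 ∈ Ideal.span ({h1, h2, h3, h4} : Set (MvPolynomial (Fin 2) k)) :=
    Ideal.subset_span (by simp)
  have mh3 : h3 ∈ Ideal.span ({h1, h2, h3, h4} : Set (MvPolynomial (Fin 2) k)) :=
    Ideal.subset_span (by simp)
  have mh4 : h4 ∈ Ideal.span ({h1, h2, h3, h4} : Set (MvPolynomial (Fin 2) k)) :=
    Ideal.subset_span (by simp)
  apply le_antisymm
  · rw [Ideal.span_le]
    rintro p hp
    simp only [Set.mem_insert_iff, Set.mem_singleton_iff] at hp
    rcases hp with rfl | rfl | rfl | rfl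
    · -- g1 = h3 - y * h2
      have e : g1 = h3 + (-X 1) * h2 := by rw [hg1, hh2, hh3]; ring
      rw [e]
      exact Ideal.add_mem _ mh3 (Ideal.mul_mem_left _ _ mh2)
    · -- g2 = -h2
      have e : g2 = (-1 : MvPolynomial (Fin 2) k) * h2 := by rw [hg2, hh2]; ring
      rw [e]; exact Ideal.mul_mem_left _ _ mh2
    · -- g3 = h1 + y * h2
      have e : g3 = h1 + X 1 * h2 := by rw [hg3, hh1, hh2]; ring
      rw [e]
      exact Ideal.add_mem _ mh1 (Ideal.mul_mem_left _ _ mh2)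
    · -- g4 = h4 + y² h1 + y³ h2 + y² h3
      have e : g4 = h4 + (X 1 ^ 2 * h1 + (X 1 ^ 3 * h2 + X 1 ^ 2 * h3)) := by
        rw [hg4, hh1, hh2, hh3, hh4]; ring
      rw [e]
      exact Ideal.add_mem _ mh4 (Ideal.add_mem _ (Ideal.mul_mem_left _ _ mh1)
        (Ideal.add_mem _ (Ideal.mul_mem_left _ _ mh2) (Ideal.mul_mem_left _ _ mh3)))
  · rw [Ideal.span_le]
    rintro p hp
    simp only [Set.mem_insert_iff, Set.mem_singleton_iff] at hp
    rcases hp with rfl | rfl | rfl | rfl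
    · -- h1 = y * g2 + g3
      have e : h1 = g3 + X 1 * g2 := by rw [hh1, hg2, hg3]; ring
      rw [e]
      exact Ideal.add_mem _ mg3 (Ideal.mul_mem_left _ _ mg2)
    · -- h2 = -g2
      have e : h2 = (-1 : MvPolynomial (Fin 2) k) * g2 := by rw [hh2, hg2]; ring
      rw [e]; exact Ideal.mul_mem_left _ _ mg2
    · -- h3 = g1 - y * g2
      have e : h3 = g1 + (-X 1) * g2 := by rw [hh3, hg1, hg2]; ring
      rw [e]
      exact Ideal.add_mem _ mg1 (Ideal.mul_mem_left _ _ mg2)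
    · -- h4 = g4 - y² g1 + y³ g2 - y² g3
      have e : h4 = g4 + ((-X 1 ^ 2) * g1 + (X 1 ^ 3 * g2 + (-X 1 ^ 2) * g3)) := by
        rw [hh4, hg1, hg2, hg3, hg4]; ring
      rw [e]
      exact Ideal.add_mem _ mg4 (Ideal.add_mem _ (Ideal.mul_mem_left _ _ mg1)
        (Ideal.add_mem _ (Ideal.mul_mem_left _ _ mg2) (Ideal.mul_mem_left _ _ mg3)))
end
end

section
/- Let k be a field, σ and τ finite sets, and w: σ → ℤ_{>0}, v: τ → ℤ_{>0} functions assigning positive integer weights. Grade the polynomial rings A = k[X_s : s ∈ σ] and B = k[Y_r : r ∈ τ] by giving X_s degree w(s) and Y_r degree v(r). Let φ: A → B be a k-algebra homomorphism that sends every homogeneous element of degree n to a homogeneous element of degree n. Let m_A ⊆ A and m_B ⊆ B be the ideals generated by all the variables, and suppose the induced k-linear map m_A/m_A² → m_B/m_B² is bijective. Then φ is a ring isomorphism. -/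
/-!
Graded Nakayama: for positive weights, a graded map `f` such that every variable `X r` is
congruent to some `f p` modulo `m²` hits every variable, by induction on the weight of `X r`.
Indeed the degree-`v r` part of `f p - X r` lies in `m²`, so its monomials only involve
variables of smaller weight. Surjectivity of the cotangent map thus makes `φ` surjective, and
lifting each `Y r` to the degree-`v r` part of a preimage gives a graded section `ψ`. As
`φ (ψ (φ X_s) - X_s) = 0`, injectivity of the cotangent map puts `ψ (φ X_s) - X_s` in `m_A²`,
so `ψ` is surjective as well, and `φ ∘ ψ = id` makes `φ` injective.
-/

theorem Finsupp.lt_weight_of_two_le_degree {σ : Type*} {v : σ → ℕ} (hv : ∀ i, 0 < v i)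
    {d : σ →₀ ℕ} (hd : 2 ≤ d.degree) {i : σ} (hi : d i ≠ 0) : v i < d.weight v := by
  rw [← Finsupp.weight_sub_single_add hi, lt_add_iff_pos_left]
  obtain ⟨j, hj⟩ : ∃ j, (d - Finsupp.single i 1 : σ →₀ ℕ) j ≠ 0 := by
    by_contra! h
    have : d = Finsupp.single i 1 := by
      rw [← Finsupp.sub_add_single_one_cancel hi,
        show d - Finsupp.single i 1 = 0 from Finsupp.ext h, zero_add]
    simp [this] at hd
  exact (hv j).trans_le (Finsupp.le_weight_of_ne_zero' v hj)

namespace Ideal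

variable {R A B : Type*} [CommRing R] [CommRing A] [CommRing B] [Algebra R A] [Algebra R B]
  {I : Ideal A} {J : Ideal B} {f : A → B} {hf : ∀ a ∈ I, f a ∈ J}
  {g : I.Cotangent →ₗ[R] J.Cotangent}

theorem exists_sub_mem_sq_of_surjective_cotangent
    (hg : ∀ a : I, g (I.toCotangent a) = J.toCotangent ⟨f a, hf a a.2⟩)
    (hsurj : Function.Surjective g) {b : B} (hb : b ∈ J) : ∃ a ∈ I, f a - b ∈ J ^ 2 := by
  obtain ⟨c, hc⟩ := hsurj (J.toCotangent ⟨b, hb⟩)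
  obtain ⟨a, rfl⟩ := I.toCotangent_surjective c
  rw [hg] at hc
  exact ⟨a, a.2, J.toCotangent_eq.mp hc⟩

theorem mem_sq_of_injective_cotangent
    (hg : ∀ a : I, g (I.toCotangent a) = J.toCotangent ⟨f a, hf a a.2⟩)
    (hinj : Function.Injective g) {a : A} (ha : a ∈ I) (hfa : f a ∈ J ^ 2) : a ∈ I ^ 2 := by
  rw [← I.toCotangent_eq_zero ⟨a, ha⟩]
  apply hinj
  rw [hg, map_zero, J.toCotangent_eq_zero]
  exact hfa

end Ideal

namespace MvPolynomial

variable {R σ τ M : Type*}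

section CommSemiring

variable [CommSemiring R] [AddCommMonoid M]

def IsWeightedGraded (w : σ → M) (v : τ → M) (f : MvPolynomial σ R → MvPolynomial τ R) :
    Prop :=
  ∀ (n : M) (p : MvPolynomial σ R), p.IsWeightedHomogeneous w n → (f p).IsWeightedHomogeneous v n

variable {w : σ → M} {v : τ → M}

theorem IsWeightedGraded.map_weightedHomogeneousComponent
    {F : Type*} [FunLike F (MvPolynomial σ R) (MvPolynomial τ R)]
    [AddMonoidHomClass F (MvPolynomial σ R) (MvPolynomial τ R)] {f : F}
    (hf : IsWeightedGraded w v f) (n : M) (p : MvPolynomial σ R) :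
    f (weightedHomogeneousComponent w n p) = weightedHomogeneousComponent v n (f p) := by
  classical
  have hfin := weightedHomogeneousComponent_finsupp (w := w) p
  have hcomp (m : M) := hf m _ (weightedHomogeneousComponent_isWeightedHomogeneous m p)
  conv_rhs => rw [← sum_weightedHomogeneousComponent w p, finsum_eq_sum _ hfin, map_sum, map_sum]
  rw [Finset.sum_eq_single n (fun m _ hmn => (hcomp m).weightedHomogeneousComponent_ne n hmn.symm),
    (hcomp n).weightedHomogeneousComponent_same]
  intro hn
  rw [Function.notMem_support.mp (mt hfin.mem_toFinset.mpr hn), map_zero, map_zero]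

theorem isWeightedGraded_aeval {q : τ → MvPolynomial σ R}
    (hq : ∀ r, (q r).IsWeightedHomogeneous w (v r)) :
    IsWeightedGraded v w (aeval q : MvPolynomial τ R → MvPolynomial σ R) := by
  intro n p hp
  induction hp using IsWeightedHomogeneous.induction_on with
  | zero => simpa using isWeightedHomogeneous_zero R w n
  | add p p' _ _ hp hp' => simpa using hp.add hp'
  | monomial d c hd =>
    rw [aeval_monomial, ← hd, Finsupp.weight_apply, Finsupp.prod, algebraMap_eq]
    exact ((IsWeightedHomogeneous.prod _ _ _ fun r _ => (hq r).pow (d r))).C_mul c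

theorem IsWeightedGraded.exists_leftInverse {f : MvPolynomial σ R →ₐ[R] MvPolynomial τ R}
    (hf : IsWeightedGraded w v f) (hsurj : Function.Surjective f) :
    ∃ g : MvPolynomial τ R →ₐ[R] MvPolynomial σ R,
      IsWeightedGraded v w g ∧ Function.LeftInverse f g := by
  choose p hp using fun r => hsurj (X r)
  refine ⟨aeval fun r => weightedHomogeneousComponent w (v r) (p r),
    isWeightedGraded_aeval fun r => weightedHomogeneousComponent_isWeightedHomogeneous _ _, ?_⟩
  have hcomp : f.comp (aeval fun r => weightedHomogeneousComponent w (v r) (p r)) =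
      AlgHom.id R _ := algHom_ext fun r => by
    simp [hf.map_weightedHomogeneousComponent, hp,
      (isWeightedHomogeneous_X R v r).weightedHomogeneousComponent_same]
  exact DFunLike.congr_fun hcomp

theorem IsWeightedHomogeneous.mem_idealOfVars {n : M} (hn : n ≠ 0)
    {p : MvPolynomial σ R} (hp : p.IsWeightedHomogeneous w n) : p ∈ idealOfVars σ R := by
  rw [← pow_one (idealOfVars σ R), mem_pow_idealOfVars_iff]
  intro d hd
  rw [Nat.one_le_iff_ne_zero, Ne, Finsupp.degree_eq_zero_iff]
  rintro rfl
  exact hn ((hp (mem_support_iff.mp hd)).symm.trans (map_zero _))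

theorem weightedHomogeneousComponent_mem_pow_idealOfVars (w : σ → M) (n : M) {k : ℕ}
    {p : MvPolynomial σ R} (hp : p ∈ idealOfVars σ R ^ k) :
    weightedHomogeneousComponent w n p ∈ idealOfVars σ R ^ k := by
  classical
  rw [mem_pow_idealOfVars_iff'] at hp ⊢
  intro d hd
  rw [coeff_weightedHomogeneousComponent, hp d hd, ite_self]

theorem monomial_mem_of_forall_X_mem {S : Subalgebra R (MvPolynomial σ R)} {d : σ →₀ ℕ}
    (h : ∀ i ∈ d.support, X i ∈ S) (c : R) : monomial d c ∈ S := by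
  rw [monomial_eq]
  exact mul_mem (S.algebraMap_mem c) (prod_mem fun i hi => pow_mem (h i hi) _)

end CommSemiring

theorem IsWeightedGraded.surjective_of_forall_exists_sub_X_mem_sq [CommRing R]
    {w : σ → ℕ} {v : τ → ℕ} (hv : ∀ r, 0 < v r)
    {f : MvPolynomial σ R →ₐ[R] MvPolynomial τ R} (hf : IsWeightedGraded w v f)
    (hX : ∀ r, ∃ p, f p - X r ∈ idealOfVars τ R ^ 2) : Function.Surjective f := by
  suffices hXmem : ∀ n r, v r = n → X r ∈ f.range by
    rw [← AlgHom.range_eq_top, eq_top_iff, ← adjoin_range_X, Algebra.adjoin_le_iff]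
    rintro _ ⟨r, rfl⟩
    exact hXmem _ r rfl
  intro n
  induction n using Nat.strong_induction_on with
  | _ n ih =>
  rintro r rfl
  obtain ⟨p, hp⟩ := hX r
  set q := weightedHomogeneousComponent v (v r) (f p - X r) with hq_def
  have hq : q ∈ f.range := by
    have hq2 := weightedHomogeneousComponent_mem_pow_idealOfVars v (v r) hp
    rw [mem_pow_idealOfVars_iff] at hq2
    rw [q.as_sum]
    refine sum_mem fun d hd => monomial_mem_of_forall_X_mem (fun i hi => ?_) _
    have hwd : d.weight v = v r :=
      weightedHomogeneousComponent_isWeightedHomogeneous _ _ (mem_support_iff.mp hd)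
    exact ih _ (hwd ▸ Finsupp.lt_weight_of_two_le_degree hv (hq2 d hd)
      (Finsupp.mem_support_iff.mp hi)) i rfl
  have hXr : X r = f (weightedHomogeneousComponent w (v r) p) - q := by
    rw [hf.map_weightedHomogeneousComponent, hq_def, map_sub,
      (isWeightedHomogeneous_X R v r).weightedHomogeneousComponent_same, sub_sub_cancel]
  rw [hXr]
  exact sub_mem ⟨_, rfl⟩ hq

end MvPolynomial

open MvPolynomial

theorem stmt14_general (k : Type*) [Field k] (σ τ : Type*)
    (w : σ → ℕ) (v : τ → ℕ) (hw : ∀ s, 0 < w s) (hv : ∀ r, 0 < v r)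
    (φ : MvPolynomial σ k →ₐ[k] MvPolynomial τ k)
    (hhom : ∀ (n : ℕ) (p : MvPolynomial σ k),
      p.IsWeightedHomogeneous w n → (φ p).IsWeightedHomogeneous v n)
    (mA : Ideal (MvPolynomial σ k)) (hmA : mA = Ideal.span (Set.range MvPolynomial.X))
    (mB : Ideal (MvPolynomial τ k)) (hmB : mB = Ideal.span (Set.range MvPolynomial.X))
    (hle : ∀ p ∈ mA, φ p ∈ mB)
    (g : mA.Cotangent →ₗ[k] mB.Cotangent)
    (hg : ∀ p : mA, g (mA.toCotangent p) = mB.toCotangent ⟨φ p, hle p p.2⟩)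
    (hbij : Function.Bijective g) :
    Function.Bijective φ := by
  subst hmA hmB
  have hφ : IsWeightedGraded w v φ := hhom
  have hφX (r : τ) : ∃ p, φ p - X r ∈ idealOfVars τ k ^ 2 := by
    obtain ⟨p, -, hp⟩ :=
      Ideal.exists_sub_mem_sq_of_surjective_cotangent hg hbij.2 (Ideal.subset_span ⟨r, rfl⟩)
    exact ⟨p, hp⟩
  obtain ⟨ψ, hψ, hφψ⟩ :=
    hφ.exists_leftInverse (hφ.surjective_of_forall_exists_sub_X_mem_sq hv hφX)
  have hψX (s : σ) : ∃ b, ψ b - X s ∈ idealOfVars σ k ^ 2 := by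
    have hXs := isWeightedHomogeneous_X k w s
    refine ⟨φ (X s), Ideal.mem_sq_of_injective_cotangent hg hbij.1 ?_ ?_⟩
    · exact ((hψ _ _ (hφ _ _ hXs)).sub hXs).mem_idealOfVars (hw s).ne'
    · rw [map_sub, hφψ, sub_self]
      exact zero_mem _
  have hψsurj := hψ.surjective_of_forall_exists_sub_X_mem_sq hw hψX
  exact ⟨(hφψ.rightInverse_of_surjective hψsurj).injective, hφψ.surjective⟩

/-- Let `A = k[X_s : s ∈ σ]` and `B = k[Y_r : r ∈ τ]` be polynomial rings over
a field `k` in finitely many variables, graded by strictly positive integer weights `w`, `v`.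
Let `φ : A → B` be a `k`-algebra homomorphism sending homogeneous elements of degree `n` to
homogeneous elements of degree `n`.  If the induced `k`-linear map
`m_A/m_A² → m_B/m_B²` (here `g`, on cotangent spaces of the ideals generated by the variables)
is bijective, then `φ` is a ring isomorphism (i.e. bijective). -/
theorem stmt14 (k : Type*) [Field k] (σ τ : Type*) [Finite σ] [Finite τ]
    (w : σ → ℕ) (v : τ → ℕ) (hw : ∀ s, 0 < w s) (hv : ∀ r, 0 < v r)
    (φ : MvPolynomial σ k →ₐ[k] MvPolynomial τ k)
    (hhom : ∀ (n : ℕ) (p : MvPolynomial σ k),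
      p.IsWeightedHomogeneous w n → (φ p).IsWeightedHomogeneous v n)
    (mA : Ideal (MvPolynomial σ k)) (hmA : mA = Ideal.span (Set.range MvPolynomial.X))
    (mB : Ideal (MvPolynomial τ k)) (hmB : mB = Ideal.span (Set.range MvPolynomial.X))
    (hle : ∀ p ∈ mA, φ p ∈ mB)
    (g : mA.Cotangent →ₗ[k] mB.Cotangent)
    (hg : ∀ p : mA, g (mA.toCotangent p) = mB.toCotangent ⟨φ p, hle p p.2⟩)
    (hbij : Function.Bijective g) :
    Function.Bijective φ :=
  stmt14_general k σ τ w v hw hv φ hhom mA hmA mB hmB hle g hg hbij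
end

section
/- Work in S = k[a₁₁, a₁₂, a₁₃, a₂₁, a₃₁, a₄₁][x,y]. Let f₀ = −x³ + x²·y·a₂₁ + x·y·a₃₁ + y·a₄₁ and f₃ = x²·y·a₁₃ − x·y²·a₂₁·a₁₃ + x·y·a₁₂ − y²·a₂₁·a₁₂ − y²·a₃₁·a₁₃ + y² + y·a₁₁; these are the maximal minors of the 4×3 matrix [[y² + y·a₁₁, y·a₁₂, y·a₁₃], [−x + y·a₂₁, 1, 0], [y·a₃₁, −x, 1], [y·a₄₁, 0, −x]] obtained by deleting the first row and the last row, respectively. Then the resultant of f₀ and f₃ with respect to x (f₀ having degree 3 and f₃ degree 2 in x), an element of k[a₁₁, a₁₂, a₁₃, a₂₁, a₃₁, a₄₁][y], has degree at most 6 as a polynomial in y. -/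
/-!
Over `k[a][y]`, `Res_x(f₀, f₃)` is the 13-term determinant of the Sylvester matrix of a cubic and
a quadratic. Substituting the coefficients of `f₀` and `f₃`, the matrix itself only bounds the
`y`-degree by 8; the terms of degree 7 and 8 cancel. Heuristically, `Res_x(f₀, f₃) = ∏ f₃(ξ)` over
the roots `ξ` of `f₀`: two of them stay bounded as `y → ∞` and the third is `ξ ≈ a₂₁y`, and since
`f₃ = y((x - a₂₁y)(a₁₃x + a₁₂) + (1 - a₃₁a₁₃)y + a₁₁)`, each factor `f₃(ξ)` grows only like `y²`.
-/

noncomputable section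

/-- The Sylvester matrix of two polynomials `p, q ∈ T[x]` of formal degrees `n` and `m`
respectively: a square matrix of size `m + n` whose first `m` columns carry the coefficients of
`p` and whose last `n` columns carry the coefficients of `q` (ascending order, shifted copies).
Its determinant is the resultant `res_x(p, q)`. -/
def sylvester {T : Type*} [CommRing T] (n m : ℕ) (p q : Polynomial T) :
    Matrix (Fin (m + n)) (Fin (m + n)) T :=
  fun i j =>
    if (j : ℕ) < m then
      (if (j : ℕ) ≤ (i : ℕ) then p.coeff ((i : ℕ) - (j : ℕ)) else 0)
    else
      (if (j : ℕ) - m ≤ (i : ℕ) then q.coeff ((i : ℕ) - ((j : ℕ) - m)) else 0)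

open Polynomial

theorem det_sylvester_three_two {T : Type*} [CommRing T] (p₀ p₁ p₂ p₃ q₀ q₁ q₂ : T) :
    (_root_.sylvester 3 2 (C p₀ + C p₁ * X + C p₂ * X ^ 2 + C p₃ * X ^ 3)
      (C q₀ + C q₁ * X + C q₂ * X ^ 2)).det =
      p₀ ^ 2 * q₂ ^ 3 - p₀ * p₁ * q₁ * q₂ ^ 2 - 2 * p₀ * p₂ * q₀ * q₂ ^ 2
        + p₀ * p₂ * q₁ ^ 2 * q₂ + 3 * p₀ * p₃ * q₀ * q₁ * q₂ - p₀ * p₃ * q₁ ^ 3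
        + p₁ ^ 2 * q₀ * q₂ ^ 2 - p₁ * p₂ * q₀ * q₁ * q₂ - 2 * p₁ * p₃ * q₀ ^ 2 * q₂
        + p₁ * p₃ * q₀ * q₁ ^ 2 + p₂ ^ 2 * q₀ ^ 2 * q₂ - p₂ * p₃ * q₀ ^ 2 * q₁
        + p₃ ^ 2 * q₀ ^ 3 := by
  have hM : _root_.sylvester 3 2 (C p₀ + C p₁ * X + C p₂ * X ^ 2 + C p₃ * X ^ 3)
      (C q₀ + C q₁ * X + C q₂ * X ^ 2) =
      !![p₀, 0, q₀, 0, 0; p₁, p₀, q₁, q₀, 0; p₂, p₁, q₂, q₁, q₀; p₃, p₂, 0, q₂, q₁;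
        0, p₃, 0, 0, q₂] := by
    ext i j
    fin_cases i <;> fin_cases j <;> simp [_root_.sylvester]
  rw [hM]
  simp only [Matrix.det_succ_row_zero, Matrix.det_unique, Fin.sum_univ_succ,
    Matrix.submatrix_apply, Matrix.of_apply, Matrix.cons_val, Fin.succAbove,
    Fin.default_eq_zero, Fin.coe_ofNat_eq_mod, Fin.reduceSucc, Fin.reduceCastSucc, Fin.reduceLT,
    ↓reduceIte]
  ring

theorem degree_det_sylvester_minors_le {R : Type*} [CommRing R] (a : Fin 6 → R)
    (f₀ f₃ : R[X][X])
    (hf₀ : f₀ = -X ^ 3 + X ^ 2 * C X * C (C (a 3)) + X * C X * C (C (a 4)) + C X * C (C (a 5)))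
    (hf₃ : f₃ = X ^ 2 * C X * C (C (a 2)) - X * C X ^ 2 * C (C (a 3)) * C (C (a 2))
      + X * C X * C (C (a 1)) - C X ^ 2 * C (C (a 3)) * C (C (a 1))
      - C X ^ 2 * C (C (a 4)) * C (C (a 2)) + C X ^ 2 + C X * C (C (a 0))) :
    (_root_.sylvester 3 2 f₀ f₃).det.degree ≤ 6 := by
  have hf₀' : f₀ = C (X * C (a 5)) + C (X * C (a 4)) * X + C (X * C (a 3)) * X ^ 2
      + C (-1) * X ^ 3 := by
    rw [hf₀]
    simp only [map_mul, map_neg, map_one]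
    ring
  have hf₃' : f₃ = C (X * C (a 0) + X ^ 2 * (1 - C (a 3) * C (a 1) - C (a 4) * C (a 2)))
      + C (X * C (a 1) - X ^ 2 * C (a 3) * C (a 2)) * X + C (X * C (a 2)) * X ^ 2 := by
    rw [hf₃]
    simp only [map_mul, map_add, map_sub, map_pow, map_one]
    ring
  rw [hf₀', hf₃', det_sylvester_three_two]
  ring_nf
  compute_degree

/-- In `S = k[a₁₁,a₁₂,a₁₃,a₂₁,a₃₁,a₄₁][x,y]`, realized as
`(k[a][y])[x] = Polynomial (Polynomial (MvPolynomial (Fin 6) k))` with the variables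
`a₁₁,…,a₄₁` indexed by `0,…,5`, `y` the inner polynomial variable and `x` the outer one, let
`f₀ = −x³ + x²ya₂₁ + xya₃₁ + ya₄₁` and
`f₃ = x²ya₁₃ − xy²a₂₁a₁₃ + xya₁₂ − y²a₂₁a₁₂ − y²a₃₁a₁₃ + y² + ya₁₁`
be the two maximal minors of the spread-out Hilbert–Burch matrix of `E = (y², x³)`.  Then the
resultant of `f₀` and `f₃` with respect to `x` (with `f₀` of degree 3 and `f₃` of degree 2
in `x`), an element of `k[a][y]`, has degree at most 6 as a polynomial in `y`. -/
theorem stmt15 (k : Type*) [Field k]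
    (x : Polynomial (Polynomial (MvPolynomial (Fin 6) k)))
    (y : Polynomial (Polynomial (MvPolynomial (Fin 6) k)))
    (a : Fin 6 → Polynomial (Polynomial (MvPolynomial (Fin 6) k)))
    (hx : x = Polynomial.X)
    (hy : y = Polynomial.C Polynomial.X)
    (ha : a = fun i => Polynomial.C (Polynomial.C (MvPolynomial.X i)))
    (f₀ f₃ : Polynomial (Polynomial (MvPolynomial (Fin 6) k)))
    -- variable indices: a₁₁ = a 0, a₁₂ = a 1, a₁₃ = a 2, a₂₁ = a 3, a₃₁ = a 4, a₄₁ = a 5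
    (hf₀ : f₀ = -x ^ 3 + x ^ 2 * y * a 3 + x * y * a 4 + y * a 5)
    (hf₃ : f₃ = x ^ 2 * y * a 2 - x * y ^ 2 * a 3 * a 2 + x * y * a 1
      - y ^ 2 * a 3 * a 1 - y ^ 2 * a 4 * a 2 + y ^ 2 + y * a 0) :
    (sylvester 3 2 f₀ f₃).det.degree ≤ 6 := by
  subst hx hy ha
  exact degree_det_sylvester_minors_le MvPolynomial.X f₀ f₃ hf₀ hf₃
end
end
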